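/- Let R be a skew field and a1, a2, a3, a4 units of R. For i ∈ Z/4Z set A_i := a_i·a_{i+1}·a_{i+2}·a_{i+3} (indices mod 4), assume 1 + A_1 is a unit, and define b_1 := (1 + A_3^{-1})·a_3, b_2 := (1 + A_4)^{-1}·a_4, b_3 := (1 + A_1^{-1})·a_1, b_4 := (1 + A_2)^{-1}·a_2, and B_i := b_i·b_{i+1}·b_{i+2}·b_{i+3}. Then for every i ∈ Z/4Z one has b_i·b_{i+1} = (a_i·a_{i+1})^{-1} and A_i = B_{i+2}^{-1}. -/

import Mathlib

/-!
Everything rests on `(1 + a b) a = a (1 + b a)`. Applied to a rotation of the cyclic product it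
shows that all `1 + A_i` are units once `1 + A_1` is. Its inverted form, the push-through identity
`a (1 + b a)⁻¹ = (1 + a b)⁻¹ a`, moves `a_3` past `(1 + A_4)⁻¹` in `b_1 b_2`, leaving
`(1 + A_3⁻¹)(1 + A_3)⁻¹ = A_3⁻¹`. Shifting indices by two is a symmetry of the move, so computing
`b_1 b_2` and `b_2 b_3` gives all four products, and each `B_{i+2}` is a product of two of them.
-/

theorem one_add_mul_mul_comm {R : Type*} [Semiring R] (a b : R) :
    (1 + a * b) * a = a * (1 + b * a) := by
  simp only [add_mul, mul_add, one_mul, mul_one, mul_assoc]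

theorem one_add_mul_comm_ne_zero {R : Type*} [Semiring R] [NoZeroDivisors R] {a b : R}
    (h : 1 + a * b ≠ 0) : 1 + b * a ≠ 0 := by
  intro hba
  have ha : a ≠ 0 := by rintro rfl; simp_all
  exact h <| (mul_eq_zero.mp (by rw [one_add_mul_mul_comm, hba, mul_zero])).resolve_right ha

namespace DivisionRing

variable {R : Type*} [DivisionRing R]

theorem mul_inv_one_add_mul_comm (a b : R) : a * (1 + b * a)⁻¹ = (1 + a * b)⁻¹ * a := by
  by_cases h : 1 + a * b = 0
  · have h' : 1 + b * a = 0 := not_not.mp fun h' => one_add_mul_comm_ne_zero h' h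
    rw [h, h', inv_zero, mul_zero, zero_mul]
  · rw [eq_inv_mul_iff_mul_eq₀ h, ← mul_assoc, one_add_mul_mul_comm, mul_assoc,
      mul_inv_cancel₀ (one_add_mul_comm_ne_zero h), mul_one]

theorem one_add_rotate_ne_zero {a b c d : R} (h : 1 + a * b * c * d ≠ 0) :
    1 + b * c * d * a ≠ 0 := by
  simpa only [mul_assoc] using one_add_mul_comm_ne_zero (a := a) (b := b * c * d)
    (by simpa only [mul_assoc] using h)

theorem one_add_inv_mul_inv_one_add {x : R} (hx : x ≠ 0) (h : 1 + x ≠ 0) :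
    (1 + x⁻¹) * (1 + x)⁻¹ = x⁻¹ := by
  rw [mul_inv_eq_iff_eq_mul₀ h, mul_add, mul_one, inv_mul_cancel₀ hx, add_comm]

theorem two_by_two_move_b₁_mul_b₂ {a b c d : R} (ha : a ≠ 0) (hb : b ≠ 0) (hc : c ≠ 0)
    (hd : d ≠ 0) (h : 1 + c * d * a * b ≠ 0) :
    (1 + (c * d * a * b)⁻¹) * c * ((1 + d * a * b * c)⁻¹ * d) = (a * b)⁻¹ := by
  have hA : c * d * a * b ≠ 0 := by simp [ha, hb, hc, hd]
  calc (1 + (c * d * a * b)⁻¹) * c * ((1 + d * a * b * c)⁻¹ * d)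
      = (1 + (c * d * a * b)⁻¹) * (c * (1 + (d * a * b) * c)⁻¹) * d := by
        simp only [mul_assoc]
    _ = (1 + (c * d * a * b)⁻¹) * (1 + c * d * a * b)⁻¹ * (c * d) := by
        rw [mul_inv_one_add_mul_comm]; simp only [mul_assoc]
    _ = (a * b)⁻¹ := by
        rw [one_add_inv_mul_inv_one_add hA h]
        simp [mul_inv_rev, mul_assoc, hc, hd]

theorem two_by_two_move_b₂_mul_b₃ {a b c d : R} (ha : a ≠ 0) (hb : b ≠ 0) (hc : c ≠ 0)
    (hd : d ≠ 0) (h : 1 + d * a * b * c ≠ 0) :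
    (1 + d * a * b * c)⁻¹ * d * ((1 + (a * b * c * d)⁻¹) * a) = (b * c)⁻¹ := by
  have key : d * ((1 + (a * b * c * d)⁻¹) * a) = (1 + d * a * b * c) * (b * c)⁻¹ := by
    simp [mul_add, add_mul, mul_inv_rev, mul_assoc, ha, hb, hc, hd, add_comm]
  rw [mul_assoc, key, inv_mul_cancel_left₀ h]

theorem inv_eq_of_mul_eq_inv_of_mul_eq_inv {x y z w p₁ p₂ q₁ q₂ : R}
    (hxy : x * y = (p₁ * p₂)⁻¹) (hzw : z * w = (q₁ * q₂)⁻¹) :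
    q₁ * q₂ * p₁ * p₂ = (x * y * z * w)⁻¹ := by
  rw [mul_assoc (x * y), hxy, hzw, ← mul_inv_rev, inv_inv, mul_assoc (q₁ * q₂)]

end DivisionRing

open DivisionRing in
/-- Under the two-by-two move on `A`-coordinates (`b_1 = (1+A_3⁻¹)a_3`,
`b_2 = (1+A_4)⁻¹a_4`, `b_3 = (1+A_1⁻¹)a_1`, `b_4 = (1+A_2)⁻¹a_2`, where
`A_i := a_i a_{i+1} a_{i+2} a_{i+3}` with indices mod 4 and `1 + A_1` is a unit),
one has `b_i b_{i+1} = (a_i a_{i+1})⁻¹` and `A_i = B_{i+2}⁻¹` for all `i ∈ ℤ/4ℤ`,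
where `B_i := b_i b_{i+1} b_{i+2} b_{i+3}`. -/
theorem two_by_two_move_monomial_relations
    {R : Type*} [DivisionRing R]
    (a1 a2 a3 a4 : R)
    (ha1 : IsUnit a1) (ha2 : IsUnit a2) (ha3 : IsUnit a3) (ha4 : IsUnit a4)
    (A1 A2 A3 A4 : R)
    (hA1 : A1 = a1 * a2 * a3 * a4) (hA2 : A2 = a2 * a3 * a4 * a1)
    (hA3 : A3 = a3 * a4 * a1 * a2) (hA4 : A4 = a4 * a1 * a2 * a3)
    (hu : IsUnit (1 + A1))
    (b1 b2 b3 b4 : R)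
    (hb1 : b1 = (1 + A3⁻¹) * a3) (hb2 : b2 = (1 + A4)⁻¹ * a4)
    (hb3 : b3 = (1 + A1⁻¹) * a1) (hb4 : b4 = (1 + A2)⁻¹ * a2)
    (B1 B2 B3 B4 : R)
    (hB1 : B1 = b1 * b2 * b3 * b4) (hB2 : B2 = b2 * b3 * b4 * b1)
    (hB3 : B3 = b3 * b4 * b1 * b2) (hB4 : B4 = b4 * b1 * b2 * b3) :
    b1 * b2 = (a1 * a2)⁻¹ ∧ b2 * b3 = (a2 * a3)⁻¹ ∧
    b3 * b4 = (a3 * a4)⁻¹ ∧ b4 * b1 = (a4 * a1)⁻¹ ∧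
    A1 = B3⁻¹ ∧ A2 = B4⁻¹ ∧ A3 = B1⁻¹ ∧ A4 = B2⁻¹ := by
  rw [isUnit_iff_ne_zero] at ha1 ha2 ha3 ha4 hu
  subst hA1 hA2 hA3 hA4 hb1 hb2 hb3 hb4 hB1 hB2 hB3 hB4
  have hu2 := one_add_rotate_ne_zero hu
  have hu3 := one_add_rotate_ne_zero hu2
  have hu4 := one_add_rotate_ne_zero hu3
  have h12 := two_by_two_move_b₁_mul_b₂ ha1 ha2 ha3 ha4 hu3
  have h23 := two_by_two_move_b₂_mul_b₃ ha1 ha2 ha3 ha4 hu4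
  have h34 := two_by_two_move_b₁_mul_b₂ ha3 ha4 ha1 ha2 hu
  have h41 := two_by_two_move_b₂_mul_b₃ ha3 ha4 ha1 ha2 hu2
  exact ⟨h12, h23, h34, h41, inv_eq_of_mul_eq_inv_of_mul_eq_inv h34 h12,
    inv_eq_of_mul_eq_inv_of_mul_eq_inv h41 h23, inv_eq_of_mul_eq_inv_of_mul_eq_inv h12 h34,
    inv_eq_of_mul_eq_inv_of_mul_eq_inv h23 h41⟩
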